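/- arXiv:2508.04155 — 2 statements merged into one kernel-verified Lean document; each statement's English description precedes it below -/
import Mathlib

section
/- Combined distance lower bound for the ProdSig metric (Equations 5–7 made precise): Fix θ ∈ EuclideanSpace ℝ (Fin m) and k₀. Suppose (Assumption 1) x ↦ -log(f(x,θ)^{(k₀)}) is Lipschitz with constant C_L > 0 on EuclideanSpace ℝ (Fin n); suppose that for x ∈ {x₀, x*} the map ϑ ↦ log(f(x,ϑ)^{(k₀)}) is differentiable with gradient -g(x,ϑ) continuous along the segment from 0 to θ; suppose (Assumption 2) ‖g(x, t•θ) - g(x,θ)‖ ≤ ξ for all t ∈ [0,1] and x ∈ {x₀, x*}; suppose log(f(x₀,0)^{(k₀)}) = log(f(x*,0)^{(k₀)}); and suppose (threat model) g(x*,θ)^{(i)} = g(x₀,θ)^{(i)} for every index i ∉ M, where M ⊆ Fin m. Then C_L · ‖x* - x₀‖ ≥ | Σ_{i ∈ M} ( g(x*,θ)^{(i)} - g(x₀,θ)^{(i)} ) θ^{(i)} | - 2 ξ ‖θ‖. -/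
open NNReal RealInnerProductSpace

/-!
Write `φₓ ϑ = log f(x, ϑ)`, so that `∇φₓ = -g x`. By the mean value inequality along the segment
`[0, θ]`, Assumption 2 makes the first-order expansion `φₓ θ - φₓ 0 ≈ -⟪g x θ, θ⟫` exact up to
`ξ ‖θ‖`, for `x = x₀` and `x = x*`. Since `φ_{x₀} 0 = φ_{x*} 0`, subtracting the two expansions
bounds `|⟪g x* θ - g x₀ θ, θ⟫|` by `|φ_{x*} θ - φ_{x₀} θ| + 2 ξ ‖θ‖`, and the first term is at most
`C_L ‖x* - x₀‖` by Assumption 1. The threat model turns the inner product into the sum over `M`.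
-/

section Gradient

variable {E : Type*} [NormedAddCommGroup E] [InnerProductSpace ℝ E] [CompleteSpace E]

theorem abs_sub_sub_inner_gradient_le {φ : E → ℝ} {x y : E} {ξ : ℝ}
    (hφ : ∀ z ∈ segment ℝ x y, DifferentiableAt ℝ φ z)
    (hbound : ∀ z ∈ segment ℝ x y, ‖gradient φ z - gradient φ y‖ ≤ ξ) :
    |φ y - φ x - ⟪gradient φ y, y - x⟫| ≤ ξ * ‖y - x‖ := by
  have hfderiv : ∀ z ∈ segment ℝ x y,
      HasFDerivWithinAt φ (InnerProductSpace.toDual ℝ E (gradient φ z)) (segment ℝ x y) z :=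
    fun z hz => (hφ z hz).hasGradientAt.hasFDerivAt.hasFDerivWithinAt
  have hbound' : ∀ z ∈ segment ℝ x y, ‖InnerProductSpace.toDual ℝ E (gradient φ z)
      - InnerProductSpace.toDual ℝ E (gradient φ y)‖ ≤ ξ := fun z hz => by
    rw [← map_sub, LinearIsometryEquiv.norm_map]
    exact hbound z hz
  exact (convex_segment x y).norm_image_sub_le_of_norm_hasFDerivWithin_le' hfderiv hbound'
    (left_mem_segment ℝ x y) (right_mem_segment ℝ x y)

end Gradient

theorem EuclideanSpace.sum_sub_mul_eq_inner_sub {ι : Type*} [Fintype ι]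
    (M : Finset ι) {u v : EuclideanSpace ℝ ι} (w : EuclideanSpace ℝ ι)
    (huv : ∀ i ∉ M, u i = v i) :
    ∑ i ∈ M, (u i - v i) * w i = ⟪u - v, w⟫ := by
  rw [PiLp.inner_apply, ← Finset.sum_subset (Finset.subset_univ M)]
  · exact Finset.sum_congr rfl fun i _ => by simp [mul_comm]
  · intro i _ hi
    simp [huv i hi]

theorem prodsig_combined_bound_general {n m : ℕ}
    (f : EuclideanSpace ℝ (Fin n) → EuclideanSpace ℝ (Fin m) → ℝ)
    (θ : EuclideanSpace ℝ (Fin m))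
    (g : EuclideanSpace ℝ (Fin n) → EuclideanSpace ℝ (Fin m) → EuclideanSpace ℝ (Fin m))
    (hg : ∀ x ϑ, g x ϑ = -gradient (fun ϑ' => Real.log (f x ϑ')) ϑ)
    (CL : ℝ≥0)
    (hLip : LipschitzWith CL (fun x => -Real.log (f x θ)))
    (x₀ xstar : EuclideanSpace ℝ (Fin n))
    (hdiff : ∀ x ∈ ({x₀, xstar} : Set (EuclideanSpace ℝ (Fin n))),
      Differentiable ℝ (fun ϑ => Real.log (f x ϑ)) ∧
      ContinuousOn (gradient fun ϑ => Real.log (f x ϑ)) (segment ℝ 0 θ))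
    (ξ : ℝ)
    (hsmooth : ∀ x ∈ ({x₀, xstar} : Set (EuclideanSpace ℝ (Fin n))),
      ∀ t ∈ Set.Icc (0:ℝ) 1, ‖g x (t • θ) - g x θ‖ ≤ ξ)
    (hzero : Real.log (f x₀ 0) = Real.log (f xstar 0))
    (M : Finset (Fin m))
    (hagree : ∀ i ∉ M, g xstar θ i = g x₀ θ i) :
    (CL : ℝ) * ‖xstar - x₀‖
      ≥ |∑ i ∈ M, (g xstar θ i - g x₀ θ i) * θ i| - 2 * ξ * ‖θ‖ := by
  have expansion : ∀ x ∈ ({x₀, xstar} : Set (EuclideanSpace ℝ (Fin n))),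
      |Real.log (f x θ) - Real.log (f x 0) + ⟪g x θ, θ⟫| ≤ ξ * ‖θ‖ := fun x hx => by
    have hgrad : gradient (fun ϑ => Real.log (f x ϑ)) = fun ϑ => -g x ϑ := by
      ext1 ϑ; rw [hg, neg_neg]
    have taylor := abs_sub_sub_inner_gradient_le (x := 0) (y := θ)
      (fun z _ => (hdiff x hx).1 z) fun z hz => by
        rw [segment_eq_image'] at hz
        obtain ⟨t, ht, rfl⟩ := hz
        simp only [hgrad, sub_zero, zero_add, neg_sub_neg]
        rw [norm_sub_rev]
        exact hsmooth x hx t ht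
    simpa only [hgrad, sub_zero, inner_neg_left, sub_neg_eq_add] using taylor
  have log_gap_le : |Real.log (f xstar θ) - Real.log (f x₀ θ)| ≤ CL * ‖xstar - x₀‖ := by
    have := hLip.dist_le_mul xstar x₀
    rwa [Real.dist_eq, dist_eq_norm, neg_sub_neg, abs_sub_comm] at this
  have expansion_star := abs_le.mp (expansion xstar (by simp))
  have expansion₀ := abs_le.mp (expansion x₀ (by simp))
  have lipschitz := abs_le.mp log_gap_le
  rw [EuclideanSpace.sum_sub_mul_eq_inner_sub M θ hagree, inner_sub_left, ge_iff_le,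
    sub_le_iff_le_add, abs_le]
  constructor <;> linarith

/-- Combined distance lower bound for the ProdSig metric (Equations 5–7 made precise).
`f x ϑ` plays the role of `f(x,ϑ)^{(k₀)} > 0`; `g x ϑ = -∇_ϑ log(f(x,ϑ)^{(k₀)})` is the
cross-entropy gradient; Assumption 1 is Lipschitzness of `x ↦ -log(f(x,θ)^{(k₀)})`;
Assumption 2 bounds the gradient variation along the segment from `0` to `θ`; the threat
model forces agreement of `g(x*,θ)` and `g(x₀,θ)` outside the masked set `M`. -/
theorem prodsig_combined_bound {n m : ℕ}
    (f : EuclideanSpace ℝ (Fin n) → EuclideanSpace ℝ (Fin m) → ℝ)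
    (hfpos : ∀ x ϑ, 0 < f x ϑ)
    (θ : EuclideanSpace ℝ (Fin m))
    (g : EuclideanSpace ℝ (Fin n) → EuclideanSpace ℝ (Fin m) → EuclideanSpace ℝ (Fin m))
    (hg : ∀ x ϑ, g x ϑ = -gradient (fun ϑ' => Real.log (f x ϑ')) ϑ)
    (CL : ℝ≥0) (hCL : 0 < CL)
    (hLip : LipschitzWith CL (fun x => -Real.log (f x θ)))
    (x₀ xstar : EuclideanSpace ℝ (Fin n))
    (hdiff : ∀ x ∈ ({x₀, xstar} : Set (EuclideanSpace ℝ (Fin n))),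
      Differentiable ℝ (fun ϑ => Real.log (f x ϑ)) ∧
      ContinuousOn (gradient fun ϑ => Real.log (f x ϑ)) (segment ℝ 0 θ))
    (ξ : ℝ) (hξ : 0 < ξ)
    (hsmooth : ∀ x ∈ ({x₀, xstar} : Set (EuclideanSpace ℝ (Fin n))),
      ∀ t ∈ Set.Icc (0:ℝ) 1, ‖g x (t • θ) - g x θ‖ ≤ ξ)
    (hzero : Real.log (f x₀ 0) = Real.log (f xstar 0))
    (M : Finset (Fin m))
    (hagree : ∀ i ∉ M, g xstar θ i = g x₀ θ i) :
    (CL : ℝ) * ‖xstar - x₀‖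
      ≥ |∑ i ∈ M, (g xstar θ i - g x₀ θ i) * θ i| - 2 * ξ * ‖θ‖ :=
  prodsig_combined_bound_general f θ g hg CL hLip x₀ xstar hdiff ξ hsmooth hzero M hagree
end

section
/- Combined distance lower bound for the Grad metric: Fix θ ∈ EuclideanSpace ℝ (Fin m). Suppose (Assumption 3) x ↦ g(x,θ) is Lipschitz with constant C_g > 0 from EuclideanSpace ℝ (Fin n) to EuclideanSpace ℝ (Fin m). Suppose (threat model) the attacker's gradient g* ∈ ℝ^m satisfies g*^{(i)} = g(x₀,θ)^{(i)} for all i ∉ M and |g*^{(i)}| ≤ ξ for all i ∈ M, where M ⊆ Fin m is finite, and that g* = g(x*,θ) for the reconstructed input x*. Then C_g · ‖x* - x₀‖ ≥ ( Σ_{i ∈ M} (g(x₀,θ)^{(i)})² )^{1/2} - ξ · (card M)^{1/2}. -/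
open NNReal

/-! Restricted to the masked coordinates `M`, the reconstructed gradient `g x*` has norm at most
`ξ √|M|`, and it differs from the ground-truth gradient `g x₀` by at most
`‖g x* - g x₀‖ ≤ C_g ‖x* - x₀‖`. The reverse triangle inequality in `EuclideanSpace ℝ M` then
bounds the masked part of `g x₀` by the sum of the two. -/

namespace EuclideanSpace

variable {ι : Type*}

noncomputable def restrictCoords (M : Finset ι) : EuclideanSpace ℝ ι →ₗ[ℝ] EuclideanSpace ℝ M where
  toFun v := WithLp.toLp 2 fun i : M => v i
  map_add' u v := by ext; simp
  map_smul' c v := by ext; simp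

@[simp]
lemma restrictCoords_apply (M : Finset ι) (v : EuclideanSpace ℝ ι) (i : M) :
    restrictCoords M v i = v i := rfl

lemma norm_restrictCoords (M : Finset ι) (v : EuclideanSpace ℝ ι) :
    ‖restrictCoords M v‖ = √(∑ i ∈ M, v i ^ 2) := by
  rw [EuclideanSpace.norm_eq, ← Finset.sum_coe_sort M]
  simp

lemma norm_restrictCoords_le [Fintype ι] (M : Finset ι) (v : EuclideanSpace ℝ ι) :
    ‖restrictCoords M v‖ ≤ ‖v‖ := by
  rw [norm_restrictCoords, EuclideanSpace.norm_eq]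
  gcongr
  calc ∑ i ∈ M, v i ^ 2 ≤ ∑ i, v i ^ 2 :=
        Finset.sum_le_sum_of_subset_of_nonneg M.subset_univ fun i _ _ => sq_nonneg _
    _ = ∑ i, ‖v i‖ ^ 2 := by simp

lemma norm_restrictCoords_le_of_abs_le {M : Finset ι} {v : EuclideanSpace ℝ ι} {ξ : ℝ}
    (hv : ∀ i ∈ M, |v i| ≤ ξ) (hξ : 0 ≤ ξ) :
    ‖restrictCoords M v‖ ≤ ξ * √M.card :=
  calc ‖restrictCoords M v‖ = √(∑ i ∈ M, v i ^ 2) := norm_restrictCoords M v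
    _ ≤ √(∑ _ ∈ M, ξ ^ 2) := Real.sqrt_le_sqrt <| Finset.sum_le_sum fun i hi =>
      sq_le_sq' (abs_le.mp (hv i hi)).1 (abs_le.mp (hv i hi)).2
    _ = ξ * √M.card := by
      rw [Finset.sum_const, nsmul_eq_mul, Real.sqrt_mul' _ (sq_nonneg ξ), Real.sqrt_sq hξ,
        mul_comm]

end EuclideanSpace

open EuclideanSpace

theorem grad_combined_bound_general {n m : ℕ}
    (g : EuclideanSpace ℝ (Fin n) → EuclideanSpace ℝ (Fin m))
    (Cg : ℝ≥0)
    (hLip : LipschitzWith Cg g)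
    (x₀ xstar : EuclideanSpace ℝ (Fin n))
    (gs : EuclideanSpace ℝ (Fin m)) (M : Finset (Fin m)) (ξ : ℝ) (hξ : 0 < ξ)
    (hbound : ∀ i ∈ M, |gs i| ≤ ξ)
    (hrec : gs = g xstar) :
    (Cg : ℝ) * ‖xstar - x₀‖
      ≥ Real.sqrt (∑ i ∈ M, (g x₀ i) ^ 2) - ξ * Real.sqrt (M.card : ℝ) := by
  subst hrec
  have hmasked : ‖restrictCoords M (g xstar)‖ ≤ ξ * √M.card :=
    norm_restrictCoords_le_of_abs_le hbound hξ.le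
  have hdiff : ‖restrictCoords M (g xstar - g x₀)‖ ≤ Cg * ‖xstar - x₀‖ :=
    (norm_restrictCoords_le M _).trans (hLip.norm_sub_le xstar x₀)
  have htriangle : ‖restrictCoords M (g x₀)‖ - ‖restrictCoords M (g xstar)‖
      ≤ ‖restrictCoords M (g xstar - g x₀)‖ := by
    rw [map_sub, norm_sub_rev]
    exact norm_sub_norm_le _ _
  rw [norm_restrictCoords] at htriangle
  linarith

/-- Combined distance lower bound for the Grad metric. `g` plays the role of
`x ↦ g(x,θ)` (the parameter-gradient of the loss as a function of the input), assumed
Lipschitz with constant `C_g > 0` (Assumption 3); the attacker's gradient `gs` agrees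
with the ground truth outside the masked set `M`, is bounded by `ξ` on `M`, and is
reproduced exactly by the reconstructed input `x*`. -/
theorem grad_combined_bound {n m : ℕ}
    (g : EuclideanSpace ℝ (Fin n) → EuclideanSpace ℝ (Fin m))
    (Cg : ℝ≥0) (hCg : 0 < Cg)
    (hLip : LipschitzWith Cg g)
    (x₀ xstar : EuclideanSpace ℝ (Fin n))
    (gs : EuclideanSpace ℝ (Fin m)) (M : Finset (Fin m)) (ξ : ℝ) (hξ : 0 < ξ)
    (hagree : ∀ i ∉ M, gs i = g x₀ i)
    (hbound : ∀ i ∈ M, |gs i| ≤ ξ)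
    (hrec : gs = g xstar) :
    (Cg : ℝ) * ‖xstar - x₀‖
      ≥ Real.sqrt (∑ i ∈ M, (g x₀ i) ^ 2) - ξ * Real.sqrt (M.card : ℝ) :=
  grad_combined_bound_general g Cg hLip x₀ xstar gs M ξ hξ hbound hrec
end
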